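/- For the period-doubling word S (fixed point of 0 ↦ 01, 1 ↦ 00), the Abelian complexity satisfies ρ^{(1)}_S((2·4^m + 1)/3) = m + 2 for every m ≥ 0. -/

import Mathlib

/-!
Two binary words of the same length are Abelian equivalent iff they contain the same number of
ones. With `D t = 3 · #ones(S[0, t)) - t` (three times the deviation of the number of ones from
its mean `t / 3`), the Abelian class of `S[j, j + n)` is thus recorded by `D (j + n) - D j`, and
`ρ(n)` is the size of the set `T n` of these jumps. The substitution gives `D (2t) = -D t` and
`D (2t + 1) = -D t - 1`, hence `T (2p) = -T p` and `T (2p + 1) = (-1 - T p) ∪ (1 - T (p + 1))`.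
Along `n = (4 ^ m - 1) / 3` and `2n + 1` this recursion closes on progressions of step 3:
`T n = {-m, 3 - m, …, 2m}` and `T (2n + 1) = {-(2m + 1), …, m + 2}`, which has `m + 2` elements.
-/

/-- Number of occurrences of `x` as a factor of `u`. -/
def occ {α : Type*} [DecidableEq α] (u x : List α) : ℕ :=
  ((List.range (u.length + 1)).filter (fun i => decide (x <+: u.drop i))).length

/-- `k`-Abelian equivalence: same number of occurrences of every word of length at most `k`. -/
def KAbEq {α : Type*} [DecidableEq α] (k : ℕ) (u v : List α) : Prop :=
  ∀ x : List α, x.length ≤ k → occ u x = occ v x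

/-- The factor of the infinite word `w` of length `n` starting at position `i`. -/
def factorAt {α : Type*} (w : ℕ → α) (i n : ℕ) : List α :=
  (List.range n).map (fun j => w (i + j))

/-- `k`-Abelian complexity: the number of `k`-Abelian classes of length-`n` factors of `w`. -/
noncomputable def rho {α : Type*} [DecidableEq α] (k : ℕ) (w : ℕ → α) (n : ℕ) : ℕ :=
  Set.ncard { C : Set (List α) | ∃ i : ℕ,
    C = { v | (∃ j : ℕ, v = factorAt w j n) ∧ KAbEq k v (factorAt w i n) } }

lemma Set.ncard_range_eq_of_eq_iff {ι α β : Type*} {f : ι → α} {g : ι → β}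
    (h : ∀ i j, f i = f j ↔ g i = g j) : (Set.range f).ncard = (Set.range g).ncard := by
  refine Set.ncard_congr (fun _ ha => g (Classical.choose ha)) (fun _ _ => ⟨_, rfl⟩) ?_ ?_
  · intro a b ha hb hab
    rw [← Classical.choose_spec ha, ← Classical.choose_spec hb]
    exact (h _ _).mpr hab
  · rintro _ ⟨i, rfl⟩
    exact ⟨f i, ⟨i, rfl⟩, (h _ _).mp (Classical.choose_spec (⟨i, rfl⟩ : f i ∈ Set.range f))⟩

lemma List.perm_iff_count_true_of_length_eq {u v : List Bool} (hl : u.length = v.length) :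
    u.Perm v ↔ u.count true = v.count true := by
  refine ⟨fun h => h.count_eq true, fun h => List.perm_iff_count.mpr ?_⟩
  have hu := u.count_true_add_count_false
  have hv := v.count_true_add_count_false
  rintro (_ | _) <;> omega

lemma factorAt_add {α : Type*} (w : ℕ → α) (i a b : ℕ) :
    factorAt w i (a + b) = factorAt w i a ++ factorAt w (i + a) b := by
  simp only [factorAt, List.range_add, List.map_append, List.map_map]
  congr 1
  exact List.map_congr_left fun j _ => by simp [add_assoc]

section AbelianComplexity
variable {α : Type*} [DecidableEq α]

lemma occ_cons (a : α) (u x : List α) :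
    occ (a :: u) x = (if x <+: a :: u then 1 else 0) + occ u x := by
  rw [occ, occ, List.length_cons, List.range_succ_eq_map, List.filter_cons, List.filter_map]
  by_cases h : x <+: a :: u <;> simp [h, Function.comp_def, add_comm]

lemma occ_nil_right (u : List α) : occ u [] = u.length + 1 := by
  simp [occ]

lemma occ_singleton (u : List α) (b : α) : occ u [b] = u.count b := by
  induction u with
  | nil => simp [occ]
  | cons a u ih =>
    rw [occ_cons, ih, List.count_cons]
    by_cases h : b = a
    · simp [h, add_comm]
    · simp [h, Ne.symm h]

lemma kabEq_one_iff_perm {u v : List α} : KAbEq 1 u v ↔ u.Perm v := by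
  refine ⟨fun h => List.perm_iff_count.mpr fun b => ?_, fun h x hx => ?_⟩
  · simpa only [occ_singleton] using h [b] le_rfl
  · match x, hx with
    | [], _ => rw [occ_nil_right, occ_nil_right, h.length_eq]
    | [b], _ => rw [occ_singleton, occ_singleton, h.count_eq]

lemma KAbEq.refl (k : ℕ) (u : List α) : KAbEq k u u := fun _ _ => rfl

lemma KAbEq.symm {k : ℕ} {u v : List α} (h : KAbEq k u v) : KAbEq k v u :=
  fun x hx => (h x hx).symm

lemma KAbEq.trans {k : ℕ} {u v w : List α} (huv : KAbEq k u v) (hvw : KAbEq k v w) :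
    KAbEq k u w :=
  fun x hx => (huv x hx).trans (hvw x hx)

lemma rho_eq_ncard_range {β : Type*} (k : ℕ) (w : ℕ → α) (n : ℕ) {g : ℕ → β}
    (hg : ∀ i j, KAbEq k (factorAt w i n) (factorAt w j n) ↔ g i = g j) :
    rho k w n = (Set.range g).ncard := by
  set cls : ℕ → Set (List α) := fun i =>
    {v | (∃ j, v = factorAt w j n) ∧ KAbEq k v (factorAt w i n)}
  have cls_eq_iff : ∀ i j, cls i = cls j ↔ KAbEq k (factorAt w i n) (factorAt w j n) := by
    refine fun i j => ⟨fun h => ?_, fun h => Set.ext fun v => ?_⟩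
    · have hi : factorAt w i n ∈ cls i := ⟨⟨i, rfl⟩, KAbEq.refl k _⟩
      exact (h ▸ hi).2
    · exact and_congr_right fun _ => ⟨fun hv => hv.trans h, fun hv => hv.trans h.symm⟩
  have hrange : {C | ∃ i, C = cls i} = Set.range cls := by
    ext C
    exact exists_congr fun i => eq_comm
  rw [rho, hrange]
  exact Set.ncard_range_eq_of_eq_iff fun i j => (cls_eq_iff i j).trans (hg i j)

end AbelianComplexity

def stepThreeProgression (a : ℤ) (k : ℕ) : Set ℤ := {d | a ≤ d ∧ d ≤ a + 3 * k ∧ 3 ∣ d - a}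

lemma ncard_stepThreeProgression (a : ℤ) (k : ℕ) :
    (stepThreeProgression a k).ncard = k + 1 := by
  have himage : stepThreeProgression a k =
      (Finset.range (k + 1)).image (fun i : ℕ => a + 3 * i) := by
    ext d
    simp only [stepThreeProgression, Set.mem_ofPred_eq, Finset.coe_image, Set.mem_image,
      Finset.coe_range, Set.mem_Iio]
    constructor
    · rintro ⟨hlo, hhi, c, hc⟩
      lift c to ℕ using by omega
      exact ⟨c, by omega, by omega⟩
    · rintro ⟨i, hi, rfl⟩
      exact ⟨by omega, by omega, ⟨i, by ring⟩⟩
  rw [himage, Set.ncard_coe_finset, Finset.card_image_of_injective _ fun i j h => by omega,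
    Finset.card_range]

def fourRepunit : ℕ → ℕ
  | 0 => 0
  | m + 1 => 4 * fourRepunit m + 1

lemma three_mul_fourRepunit_add_one (m : ℕ) : 3 * fourRepunit m + 1 = 4 ^ m := by
  induction m with
  | zero => rfl
  | succ m ih => rw [fourRepunit, pow_succ]; omega

section PeriodDoubling
variable (S : ℕ → Bool)

def discrepancy (t : ℕ) : ℤ := 3 * ((factorAt S 0 t).count true : ℤ) - t

def discrepancyJumps (n : ℕ) : Set ℤ :=
  Set.range fun j => discrepancy S (j + n) - discrepancy S j

variable {S}

lemma mem_discrepancyJumps {n : ℕ} {d : ℤ} :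
    d ∈ discrepancyJumps S n ↔ ∃ j, discrepancy S (j + n) - discrepancy S j = d :=
  Iff.rfl

lemma discrepancy_add_sub (j n : ℕ) :
    discrepancy S (j + n) - discrepancy S j = 3 * ((factorAt S j n).count true : ℤ) - n := by
  simp only [discrepancy, factorAt_add S 0 j n, zero_add, List.count_append]
  push_cast
  ring

lemma discrepancy_succ (t : ℕ) :
    discrepancy S (t + 1) = discrepancy S t + (if S t then 2 else -1) := by
  have h := discrepancy_add_sub (S := S) t 1
  cases hSt : S t <;> simp [factorAt, hSt] at h ⊢ <;> linarith

lemma rho_one_eq_ncard_discrepancyJumps (n : ℕ) :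
    rho 1 S n = (discrepancyJumps S n).ncard := by
  refine rho_eq_ncard_range 1 S n fun i j => ?_
  rw [kabEq_one_iff_perm, List.perm_iff_count_true_of_length_eq (by simp [factorAt]),
    discrepancy_add_sub, discrepancy_add_sub]
  omega

lemma discrepancyJumps_zero : discrepancyJumps S 0 = stepThreeProgression 0 0 := by
  ext d
  simp only [mem_discrepancyJumps, stepThreeProgression, add_zero, sub_self, exists_const,
    Set.mem_ofPred_eq]
  omega

variable (hS0 : ∀ n, S (2 * n) = false) (hS1 : ∀ n, S (2 * n + 1) = !S n)
include hS0 hS1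

lemma discrepancyJumps_one : discrepancyJumps S 1 = stepThreeProgression (-1) 1 := by
  ext d
  simp only [mem_discrepancyJumps, discrepancy_succ, add_sub_cancel_left, stepThreeProgression,
    Set.mem_ofPred_eq]
  constructor
  · rintro ⟨j, rfl⟩
    split <;> omega
  · intro hd
    obtain rfl | rfl : d = -1 ∨ d = 2 := by omega
    · exact ⟨0, by simpa using hS0 0⟩
    · exact ⟨1, by simpa [hS0 0] using hS1 0⟩

lemma discrepancy_two_mul (t : ℕ) : discrepancy S (2 * t) = -discrepancy S t := by
  induction t with
  | zero => simp [discrepancy, factorAt]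
  | succ t ih =>
    rw [show 2 * (t + 1) = 2 * t + 1 + 1 by ring, discrepancy_succ, discrepancy_succ,
      discrepancy_succ, hS0, hS1, ih]
    cases S t <;> simp <;> ring

lemma discrepancy_two_mul_add_one (t : ℕ) :
    discrepancy S (2 * t + 1) = -discrepancy S t - 1 := by
  rw [discrepancy_succ, hS0, discrepancy_two_mul hS0 hS1]
  simp [sub_eq_add_neg]

lemma mem_discrepancyJumps_two_mul {p : ℕ} {d : ℤ} :
    d ∈ discrepancyJumps S (2 * p) ↔ -d ∈ discrepancyJumps S p := by
  have even := discrepancy_two_mul hS0 hS1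
  have odd := discrepancy_two_mul_add_one hS0 hS1
  simp only [mem_discrepancyJumps]
  constructor
  · rintro ⟨j, rfl⟩
    obtain ⟨t, rfl | rfl⟩ := Nat.even_or_odd' j
    · exact ⟨t, by rw [← mul_add, even, even]; ring⟩
    · exact ⟨t, by rw [add_right_comm, ← mul_add, odd, odd]; ring⟩
  · rintro ⟨t, ht⟩
    exact ⟨2 * t, by rw [← mul_add, even, even]; linarith⟩

lemma mem_discrepancyJumps_two_mul_add_one {p : ℕ} {d : ℤ} :
    d ∈ discrepancyJumps S (2 * p + 1) ↔
      -d - 1 ∈ discrepancyJumps S p ∨ 1 - d ∈ discrepancyJumps S (p + 1) := by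
  have even := discrepancy_two_mul hS0 hS1
  have odd := discrepancy_two_mul_add_one hS0 hS1
  have shift (t : ℕ) : 2 * t + 1 + (2 * p + 1) = 2 * (t + (p + 1)) := by ring
  simp only [mem_discrepancyJumps]
  constructor
  · rintro ⟨j, rfl⟩
    obtain ⟨t, rfl | rfl⟩ := Nat.even_or_odd' j
    · exact Or.inl ⟨t, by rw [← add_assoc, ← mul_add, odd, even]; ring⟩
    · exact Or.inr ⟨t, by rw [shift, even, odd]; ring⟩
  · rintro (⟨t, ht⟩ | ⟨t, ht⟩)
    · exact ⟨2 * t, by rw [← add_assoc, ← mul_add, odd, even]; linarith⟩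
    · exact ⟨2 * t + 1, by rw [shift, even, odd]; linarith⟩

lemma discrepancyJumps_fourRepunit (m : ℕ) :
    discrepancyJumps S (fourRepunit m) = stepThreeProgression (-m) m ∧
      discrepancyJumps S (2 * fourRepunit m + 1) =
        stepThreeProgression (-(2 * m + 1)) (m + 1) := by
  induction m with
  | zero => exact ⟨discrepancyJumps_zero, discrepancyJumps_one hS0 hS1⟩
  | succ m ih =>
    obtain ⟨ih₁, ih₂⟩ := ih
    have h₁ : discrepancyJumps S (fourRepunit (m + 1)) =
        stepThreeProgression (-(m + 1 : ℕ)) (m + 1) := by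
      ext d
      rw [fourRepunit, show 4 * fourRepunit m + 1 = 2 * (2 * fourRepunit m) + 1 by ring,
        mem_discrepancyJumps_two_mul_add_one hS0 hS1, mem_discrepancyJumps_two_mul hS0 hS1,
        ih₁, ih₂]
      simp only [stepThreeProgression, Set.mem_ofPred_eq]
      omega
    refine ⟨h₁, Set.ext fun d => ?_⟩
    rw [mem_discrepancyJumps_two_mul_add_one hS0 hS1, h₁,
      show fourRepunit (m + 1) + 1 = 2 * (2 * fourRepunit m + 1) by rw [fourRepunit]; ring,
      mem_discrepancyJumps_two_mul hS0 hS1, ih₂]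
    simp only [stepThreeProgression, Set.mem_ofPred_eq]
    omega

end PeriodDoubling

theorem stmt8 (S : ℕ → Bool)
    (hS0 : ∀ n, S (2 * n) = false) (hS1 : ∀ n, S (2 * n + 1) = !S n)
    (m : ℕ) :
    rho 1 S ((2 * 4 ^ m + 1) / 3) = m + 2 := by
  have hlength : (2 * 4 ^ m + 1) / 3 = 2 * fourRepunit m + 1 := by
    have := three_mul_fourRepunit_add_one m
    omega
  rw [hlength, rho_one_eq_ncard_discrepancyJumps, (discrepancyJumps_fourRepunit hS0 hS1 m).2,
    ncard_stepThreeProgression]
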